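/- arXiv:2002.07211 — 6 statements merged into one kernel-verified Lean document; each statement's English description precedes it below -/
import Mathlib

section
/- In a finite rooted tree where the root has d children and every other non-leaf vertex has exactly d-1 children (a 'd-regular tree'), with leaves ordered by breadth-first-search visit time, the tree distance between two leaves with indices i and j (i ≠ j) is at least 2·(1 + log_{d-1}((|i - j| + 1)/d)). -/
/-!
If leaves `i` and `j` first meet `k` levels up, then either `k < h` and both lie below one
vertex, i.e. in a block of `(d-1)^k` consecutive indices, or `k = h` and both are among the
`d (d-1)^(h-1)` leaves. Either way `|i - j| + 1 ≤ d (d-1)^(k-1)`, and taking `log_{d-1}` gives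
`1 + log_{d-1}((|i - j| + 1) / d) ≤ k`.
-/

/-- Tree distance in the canonical `d`-regular tree of height `h` between the
leaves with BFS indices `i` and `j` (0-based): twice the number of levels one
must go up to reach the lowest common ancestor.  The ancestor of leaf `i`
located `k` levels above the leaf level has BFS index `i / (d-1)^k` within its
level (for `k < h`), and at `k = h` the two leaves meet at the root. -/
noncomputable def treeLeafDist (d h i j : ℕ) : ℕ :=
  2 * sInf {k : ℕ | k = h ∨ i / (d - 1) ^ k = j / (d - 1) ^ k}

theorem Nat.abs_sub_lt_of_div_eq_div {i j n : ℕ} (hn : 0 < n) (h : i / n = j / n) :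
    |(i : ℤ) - j| < n := by
  have hi : (i : ℤ) = n * (j / n : ℕ) + (i % n : ℕ) := by
    rw [← h]; exact_mod_cast (Nat.div_add_mod i n).symm
  have hj : (j : ℤ) = n * (j / n : ℕ) + (j % n : ℕ) := by
    exact_mod_cast (Nat.div_add_mod j n).symm
  have := Nat.mod_lt i hn
  have := Nat.mod_lt j hn
  rw [abs_sub_lt_iff, hi, hj]
  constructor <;> omega

theorem Nat.sub_one_pow_le_mul_pow_pred {d : ℕ} (hd : 1 ≤ d) (k : ℕ) :
    (d - 1) ^ k ≤ d * (d - 1) ^ (k - 1) := by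
  rcases k with _ | k
  · simpa using hd
  · rw [pow_succ', Nat.add_sub_cancel]
    exact Nat.mul_le_mul_right _ (Nat.sub_le d 1)

theorem Real.logb_le_natCast_of_le_pow {b x : ℝ} {n : ℕ} (hb : 1 < b) (hx : 0 < x)
    (h : x ≤ b ^ n) : Real.logb b x ≤ n := by
  rwa [Real.logb_le_iff_le_rpow hb hx, Real.rpow_natCast]

noncomputable def meetLevel (d h i j : ℕ) : ℕ :=
  sInf {k : ℕ | k = h ∨ i / (d - 1) ^ k = j / (d - 1) ^ k}

theorem treeLeafDist_eq (d h i j : ℕ) : treeLeafDist d h i j = 2 * meetLevel d h i j := rfl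

theorem meetLevel_spec (d h i j : ℕ) :
    meetLevel d h i j = h ∨
      i / (d - 1) ^ meetLevel d h i j = j / (d - 1) ^ meetLevel d h i j :=
  Nat.sInf_mem (s := {k : ℕ | k = h ∨ i / (d - 1) ^ k = j / (d - 1) ^ k}) ⟨h, Or.inl rfl⟩

theorem one_le_meetLevel {d h i j : ℕ} (hh : 1 ≤ h) (hij : i ≠ j) : 1 ≤ meetLevel d h i j := by
  rw [Nat.one_le_iff_ne_zero]
  intro h0
  rcases meetLevel_spec d h i j with hK | hK <;> simp_all

theorem abs_sub_add_one_le_meetLevel {d h i j : ℕ} (hd : 2 ≤ d)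
    (hi : i < d * (d - 1) ^ (h - 1)) (hj : j < d * (d - 1) ^ (h - 1)) :
    |(i : ℤ) - j| + 1 ≤ (d * (d - 1) ^ (meetLevel d h i j - 1) : ℕ) := by
  rw [Int.add_one_le_iff]
  rcases meetLevel_spec d h i j with hK | hK
  · rw [hK, abs_sub_lt_iff]
    constructor <;> omega
  · have hlt := Nat.abs_sub_lt_of_div_eq_div (pow_pos (by omega) _) hK
    exact hlt.trans_le (mod_cast Nat.sub_one_pow_le_mul_pow_pred (by omega) _)

/-- In a `d`-regular tree of height `h` (root has `d` children, every other
non-leaf vertex has `d-1` children), with leaves ordered by BFS visit time,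
the tree distance between two distinct leaves with indices `i` and `j` is at
least `2 * (1 + log_{d-1}((|i - j| + 1) / d))`. -/
theorem stmt0 (d h : ℕ) (hd : 3 ≤ d) (hh : 1 ≤ h)
    (i j : ℕ) (hi : i < d * (d - 1) ^ (h - 1)) (hj : j < d * (d - 1) ^ (h - 1))
    (hij : i ≠ j) :
    2 * (1 + Real.logb ((d : ℝ) - 1) ((|(i : ℝ) - (j : ℝ)| + 1) / d)) ≤
      (treeLeafDist d h i j : ℝ) := by
  have hK := one_le_meetLevel (d := d) hh hij
  have hd1 : ((d - 1 : ℕ) : ℝ) = d - 1 := by rw [Nat.cast_sub (by omega), Nat.cast_one]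
  have hbound : |(i : ℝ) - j| + 1 ≤ d * ((d : ℝ) - 1) ^ (meetLevel d h i j - 1) := by
    rw [← hd1]
    exact_mod_cast abs_sub_add_one_le_meetLevel (by omega) hi hj
  have hlog : Real.logb ((d : ℝ) - 1) ((|(i : ℝ) - j| + 1) / d) ≤ (meetLevel d h i j - 1 : ℕ) :=
    Real.logb_le_natCast_of_le_pow (by rw [← hd1]; exact_mod_cast (by omega : 1 < d - 1))
      (by positivity) (by rwa [div_le_iff₀' (by positivity)])
  rw [treeLeafDist_eq]
  push_cast [hK] at hlog ⊢
  linarith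
end

section
/- If G is a d-regular n-vertex graph that is bicycle-free at radius 2r, then the number of cycles in G of length at most r is at most n/(d-1)^r. -/
/-- A graph is bicycle-free at radius `ρ` if every ball of radius `ρ` contains
at most one cycle: any two cycles entirely contained in a common ball of
radius `ρ` have the same edge set. -/
def BicycleFreeAtRadius {V : Type*} [DecidableEq V] (G : SimpleGraph V) (ρ : ℕ) : Prop :=
  ∀ (v a b : V) (c₁ : G.Walk a a) (c₂ : G.Walk b b),
    c₁.IsCycle → c₂.IsCycle →
    (∀ x ∈ c₁.support, G.Reachable v x ∧ G.dist v x ≤ ρ) →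
    (∀ x ∈ c₂.support, G.Reachable v x ∧ G.dist v x ≤ ρ) →
    c₁.edges.toFinset = c₂.edges.toFinset



open Finset SimpleGraph

section aux
variable {V : Type*} [DecidableEq V] [Fintype V] {G : SimpleGraph V}


variable {V : Type*} [DecidableEq V] [Fintype V] {G : SimpleGraph V}

lemma edge_start_card_le_one (u : V) {x y : V} (p : G.Walk x y) (hp : p.IsPath)
    (hux : u = x) :
    (Finset.univ.filter fun w => s(u, w) ∈ p.edges).card ≤ 1 := by
  subst hux
  cases p with
  | nil => simp
  | @cons _ b _ h q =>
    rw [SimpleGraph.Walk.cons_isPath_iff] at hp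
    have hsub : (Finset.univ.filter fun w => s(u, w) ∈ (SimpleGraph.Walk.cons h q).edges)
        ⊆ {b} := by
      intro w hw
      simp only [Finset.mem_filter, SimpleGraph.Walk.edges_cons, List.mem_cons] at hw
      rcases hw.2 with h1 | h2
      · rw [Sym2.eq_iff] at h1
        rcases h1 with ⟨-, rfl⟩ | ⟨rfl, rfl⟩
        · simp
        · exact absurd rfl h.ne
      · exact absurd (SimpleGraph.Walk.fst_mem_support_of_mem_edges q h2) hp.2
    calc _ ≤ ({b} : Finset V).card := Finset.card_le_card hsub
    _ = 1 := by simp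

lemma edge_card_le_two (u : V) {x y : V} (p : G.Walk x y) (hp : p.IsPath) :
    (Finset.univ.filter fun w => s(u, w) ∈ p.edges).card ≤ 2 := by
  induction p with
  | nil => simp
  | @cons x b y h q ih =>
    rw [SimpleGraph.Walk.cons_isPath_iff] at hp
    by_cases hux : u = x
    · exact le_trans (edge_start_card_le_one u _ (by rw [SimpleGraph.Walk.cons_isPath_iff]; exact hp) hux) one_le_two
    · by_cases hub : u = b
      · have hsub : (Finset.univ.filter fun w => s(u, w) ∈ (SimpleGraph.Walk.cons h q).edges)
            ⊆ insert x (Finset.univ.filter fun w => s(u, w) ∈ q.edges) := by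
          intro w hw
          simp only [Finset.mem_filter, SimpleGraph.Walk.edges_cons, List.mem_cons] at hw
          rcases hw.2 with h1 | h2
          · rw [Sym2.eq_iff] at h1
            rcases h1 with ⟨rfl, rfl⟩ | ⟨-, rfl⟩
            · exact absurd rfl hux
            · simp
          · simp [h2]
        calc _ ≤ (insert x (Finset.univ.filter fun w => s(u, w) ∈ q.edges)).card :=
              Finset.card_le_card hsub
        _ ≤ (Finset.univ.filter fun w => s(u, w) ∈ q.edges).card + 1 :=
              Finset.card_insert_le _ _
        _ ≤ 1 + 1 := by
              have := edge_start_card_le_one u q hp.1 hub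
              omega
        _ ≤ 2 := by norm_num
      · have hsub : (Finset.univ.filter fun w => s(u, w) ∈ (SimpleGraph.Walk.cons h q).edges)
            ⊆ (Finset.univ.filter fun w => s(u, w) ∈ q.edges) := by
          intro w hw
          simp only [Finset.mem_filter, SimpleGraph.Walk.edges_cons, List.mem_cons] at hw ⊢
          rcases hw.2 with h1 | h2
          · rw [Sym2.eq_iff] at h1
            rcases h1 with ⟨rfl, rfl⟩ | ⟨rfl, rfl⟩
            · exact absurd rfl hux
            · exact absurd rfl hub
          · exact ⟨Finset.mem_univ w, h2⟩
        exact le_trans (Finset.card_le_card hsub) (ih hp.1)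

lemma cycle_edge_card_le_two {a : V} (c : G.Walk a a) (hc : c.IsCycle) (u : V) :
    (Finset.univ.filter fun w => s(u, w) ∈ c.edges).card ≤ 2 := by
  cases c with
  | nil => exact absurd rfl hc.ne_nil
  | @cons _ b _ h q =>
    obtain ⟨hq, he⟩ := (SimpleGraph.Walk.cons_isCycle_iff q h).1 hc
    by_cases hua : u = a
    · have hsub : (Finset.univ.filter fun w => s(u, w) ∈ (SimpleGraph.Walk.cons h q).edges)
          ⊆ insert b (Finset.univ.filter fun w => s(u, w) ∈ q.reverse.edges) := by
        intro w hw
        simp only [Finset.mem_filter, SimpleGraph.Walk.edges_cons, List.mem_cons] at hw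
        rcases hw.2 with h1 | h2
        · rw [Sym2.eq_iff] at h1
          rcases h1 with ⟨-, rfl⟩ | ⟨hub, -⟩
          · simp
          · exact absurd (hua.symm.trans hub) h.ne
        · simp [SimpleGraph.Walk.edges_reverse, List.mem_reverse, h2]
      calc _ ≤ _ := Finset.card_le_card hsub
      _ ≤ (Finset.univ.filter fun w => s(u, w) ∈ q.reverse.edges).card + 1 :=
            Finset.card_insert_le _ _
      _ ≤ 1 + 1 := by
            have := edge_start_card_le_one u q.reverse hq.reverse hua
            omega
      _ ≤ 2 := by norm_num
    · by_cases hub : u = b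
      · have hsub : (Finset.univ.filter fun w => s(u, w) ∈ (SimpleGraph.Walk.cons h q).edges)
            ⊆ insert a (Finset.univ.filter fun w => s(u, w) ∈ q.edges) := by
          intro w hw
          simp only [Finset.mem_filter, SimpleGraph.Walk.edges_cons, List.mem_cons] at hw
          rcases hw.2 with h1 | h2
          · rw [Sym2.eq_iff] at h1
            rcases h1 with ⟨rfl, rfl⟩ | ⟨-, rfl⟩
            · exact absurd rfl hua
            · simp
          · simp [h2]
        calc _ ≤ _ := Finset.card_le_card hsub
        _ ≤ (Finset.univ.filter fun w => s(u, w) ∈ q.edges).card + 1 :=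
              Finset.card_insert_le _ _
        _ ≤ 1 + 1 := by
              have := edge_start_card_le_one u q hq hub
              omega
        _ ≤ 2 := by norm_num
      · have hsub : (Finset.univ.filter fun w => s(u, w) ∈ (SimpleGraph.Walk.cons h q).edges)
            ⊆ (Finset.univ.filter fun w => s(u, w) ∈ q.edges) := by
          intro w hw
          simp only [Finset.mem_filter, SimpleGraph.Walk.edges_cons, List.mem_cons] at hw ⊢
          rcases hw.2 with h1 | h2
          · rw [Sym2.eq_iff] at h1
            rcases h1 with ⟨rfl, rfl⟩ | ⟨rfl, rfl⟩
            · exact absurd rfl hua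
            · exact absurd rfl hub
          · exact ⟨Finset.mem_univ w, h2⟩
        exact le_trans (Finset.card_le_card hsub) (edge_card_le_two u q hq)



variable {V : Type*} [DecidableEq V] [Fintype V] {G : SimpleGraph V}

lemma intra_half {a u z : V} (c : G.Walk a a) (hu : u ∈ c.support) (hz : z ∈ c.support)
    (hle : (c.takeUntil z hz).length ≤ (c.takeUntil u hu).length) :
    G.dist u z ≤ c.length := by
  have h3 := congrArg SimpleGraph.Walk.length (c.take_spec hu)
  rw [SimpleGraph.Walk.length_append] at h3
  have h4 : G.dist u z ≤ ((c.dropUntil u hu).append (c.takeUntil z hz)).length :=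
    SimpleGraph.dist_le _
  rw [SimpleGraph.Walk.length_append] at h4
  omega

lemma intra {a u z : V} (c : G.Walk a a) (hu : u ∈ c.support) (hz : z ∈ c.support) :
    G.dist u z ≤ c.length := by
  rcases le_total ((c.takeUntil z hz).length) ((c.takeUntil u hu).length) with h | h
  · exact intra_half c hu hz h
  · rw [SimpleGraph.dist_comm]
    exact intra_half c hz hu h


open scoped Classical in

lemma key (G : SimpleGraph V) [DecidableRel G.Adj]
    (d r : ℕ) (hd : 3 ≤ d) (hreg : G.IsRegularOfDegree d)
    (hbf : BicycleFreeAtRadius G (2 * r)) (hr : 1 ≤ r)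
    (a : V) (c : G.Walk a a) (hc : c.IsCycle) (hlen : c.length ≤ r) :
    (d - 1) ^ r ≤ (Finset.univ.filter fun x =>
      ∃ u ∈ c.support, G.Reachable u x ∧ G.dist u x ≤ r).card := by
  classical
  have hane : a ∈ c.support.toFinset := List.mem_toFinset.2 c.start_mem_support
  set S : Finset V := c.support.toFinset with hSdef
  have hSne : S.Nonempty := ⟨a, hane⟩
  set D : V → ℕ := fun x => S.inf' hSne (fun u => G.dist u x) with hDdef
  have hDle : ∀ x u, u ∈ c.support → D x ≤ G.dist u x := fun x u hu =>
    Finset.inf'_le _ (List.mem_toFinset.2 hu)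
  have hDex : ∀ x, ∃ u ∈ c.support, D x = G.dist u x := by
    intro x
    obtain ⟨u, hu, he⟩ := Finset.exists_mem_eq_inf' hSne (fun u => G.dist u x)
    exact ⟨u, List.mem_toFinset.1 hu, he⟩
  have hRu : ∀ u ∈ c.support, G.Reachable a u := fun u hu => ⟨c.takeUntil u hu⟩
  have hdau : ∀ u ∈ c.support, G.dist a u ≤ r :=
    fun u hu => le_trans (SimpleGraph.dist_le (c.takeUntil u hu))
      (le_trans (SimpleGraph.Walk.length_takeUntil_le c hu) hlen)
  have hD0 : ∀ u ∈ c.support, D u = 0 := fun u hu =>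
    Nat.le_antisymm (le_trans (hDle u u hu) (by rw [SimpleGraph.dist_self])) (Nat.zero_le _)
  have hD0' : ∀ x, G.Reachable a x → D x = 0 → x ∈ c.support := by
    intro x hx h0
    obtain ⟨u, hu, he⟩ := hDex x
    have hrux : G.Reachable u x := ((hRu u hu).symm.trans hx)
    have hdux : G.dist u x = 0 := by rw [← he]; exact h0
    exact (hrux.dist_eq_zero_iff.1 hdux) ▸ hu
  have hWsup : ∀ (u x : V), u ∈ c.support → ∀ (W : G.Walk u x), ∀ z ∈ W.support,
      G.Reachable a z ∧ D z ≤ W.length := by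
    intro u x hu W z hz
    refine ⟨(hRu u hu).trans ⟨W.takeUntil z hz⟩, ?_⟩
    exact le_trans (hDle z u hu) (le_trans (SimpleGraph.dist_le (W.takeUntil z hz))
      (SimpleGraph.Walk.length_takeUntil_le W hz))
  have hball : ∀ z, G.Reachable a z → D z ≤ r → G.Reachable a z ∧ G.dist a z ≤ 2 * r := by
    intro z hz hDz
    refine ⟨hz, ?_⟩
    obtain ⟨u, hu, he⟩ := hDex z
    obtain ⟨W1, hW1⟩ := (hRu u hu).exists_walk_length_eq_dist
    obtain ⟨W2, hW2⟩ := ((hRu u hu).symm.trans hz).exists_walk_length_eq_dist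
    calc G.dist a z ≤ (W1.append W2).length := SimpleGraph.dist_le _
    _ = G.dist a u + G.dist u z := by rw [SimpleGraph.Walk.length_append, hW1, hW2]
    _ ≤ r + r := Nat.add_le_add (hdau u hu) (by rw [← he]; exact hDz)
    _ = 2 * r := by ring
  have noextra : ∀ (x y : V), G.Adj x y → s(x, y) ∉ c.edges →
      ∀ (W : G.Walk x y), s(x, y) ∉ W.edges →
      (∀ z ∈ W.support, G.Reachable a z ∧ D z ≤ r) → False := by
    intro x y hxy he W hWe hWb
    have hq : W.bypass.IsPath := SimpleGraph.Walk.bypass_isPath W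
    have hqe : s(y, x) ∉ W.bypass.edges := by
      intro hmem
      exact hWe (SimpleGraph.Walk.edges_bypass_subset W (by rwa [Sym2.eq_swap] at hmem))
    have hnew : (SimpleGraph.Walk.cons hxy.symm W.bypass).IsCycle :=
      (SimpleGraph.Walk.cons_isCycle_iff _ hxy.symm).2 ⟨hq, hqe⟩
    have hb1 : ∀ z ∈ c.support, G.Reachable a z ∧ G.dist a z ≤ 2 * r := fun z hz =>
      hball z (hRu z hz) (le_of_eq_of_le (hD0 z hz) (Nat.zero_le _))
    have hb2 : ∀ z ∈ (SimpleGraph.Walk.cons hxy.symm W.bypass).support,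
        G.Reachable a z ∧ G.dist a z ≤ 2 * r := by
      intro z hz
      rw [SimpleGraph.Walk.support_cons] at hz
      rcases List.mem_cons.1 hz with rfl | hz
      · exact hball z (hWb z W.end_mem_support).1 (hWb z W.end_mem_support).2
      · have hzW : z ∈ W.support := SimpleGraph.Walk.support_bypass_subset W hz
        exact hball z (hWb z hzW).1 (hWb z hzW).2
    have heq := hbf a a y c (SimpleGraph.Walk.cons hxy.symm W.bypass) hc hnew hb1 hb2
    apply he
    have hm : s(x, y) ∈ (SimpleGraph.Walk.cons hxy.symm W.bypass).edges := by
      rw [SimpleGraph.Walk.edges_cons]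
      exact List.mem_cons.2 (Or.inl (Sym2.eq_swap))
    have h2 : s(x, y) ∈ c.edges.toFinset := by rw [heq]; exact List.mem_toFinset.2 hm
    exact List.mem_toFinset.1 h2
  have chord : ∀ u y, u ∈ c.support → y ∈ c.support → G.Adj u y → s(u, y) ∈ c.edges := by
    intro u y hu hy hadj
    by_contra hne
    have harcsup : ∀ z ∈ ((c.dropUntil u hu).append (c.takeUntil y hy)).support,
        z ∈ c.support := by
      intro z hz
      rw [SimpleGraph.Walk.mem_support_append_iff] at hz
      rcases hz with hz | hz
      · exact SimpleGraph.Walk.support_dropUntil_subset c hu hz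
      · exact SimpleGraph.Walk.support_takeUntil_subset c hy hz
    have harce : s(u, y) ∉ ((c.dropUntil u hu).append (c.takeUntil y hy)).edges := by
      intro hz
      rw [SimpleGraph.Walk.edges_append, List.mem_append] at hz
      rcases hz with hz | hz
      · exact hne (SimpleGraph.Walk.edges_dropUntil_subset c hu hz)
      · exact hne (SimpleGraph.Walk.edges_takeUntil_subset c hy hz)
    exact noextra u y hadj hne _ harce (fun z hz =>
      ⟨hRu z (harcsup z hz), le_of_eq_of_le (hD0 z (harcsup z hz)) (Nat.zero_le _)⟩)
  have uniq : ∀ m, 1 ≤ m → m ≤ r → ∀ x, G.Reachable a x → D x = m →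
      ∀ y₁ y₂, G.Adj x y₁ → G.Adj x y₂ → D y₁ ≤ m → D y₂ ≤ m → y₁ = y₂ := by
    intro m hm1 hmr x hRx hDx y₁ y₂ ha1 ha2 hd1 hd2
    by_contra hne
    have hxs : x ∉ c.support := by
      intro hx
      have := hD0 x hx
      omega
    obtain ⟨u₁, hu₁, he₁⟩ := hDex y₁
    obtain ⟨u₂, hu₂, he₂⟩ := hDex y₂
    obtain ⟨W₁, hW₁⟩ := ((hRu u₁ hu₁).symm.trans (hRx.trans ha1.reachable)).exists_walk_length_eq_dist
    obtain ⟨W₂, hW₂⟩ := ((hRu u₂ hu₂).symm.trans (hRx.trans ha2.reachable)).exists_walk_length_eq_dist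
    have hlW₁ : W₁.length ≤ m := by rw [hW₁, ← he₁]; exact hd1
    have hlW₂ : W₂.length ≤ m := by rw [hW₂, ← he₂]; exact hd2
    have hxW : ∀ (u : V), u ∈ c.support → ∀ (y : V) (W : G.Walk u y), W.length ≤ m →
        G.Adj x y → x ∉ W.support := by
      intro u hu y W hWl hady hxsup
      have h1 : m ≤ G.dist u x := by rw [← hDx]; exact hDle x u hu
      have h2 : G.dist u x ≤ (W.takeUntil x hxsup).length := SimpleGraph.dist_le _
      have h3 := congrArg SimpleGraph.Walk.length (W.take_spec hxsup)
      rw [SimpleGraph.Walk.length_append] at h3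
      have h4 : (W.dropUntil x hxsup).length = 0 := by omega
      exact hady.ne (SimpleGraph.Walk.eq_of_length_eq_zero h4)
    have hxW₁ : x ∉ W₁.support := hxW u₁ hu₁ y₁ W₁ hlW₁ ha1
    have hxW₂ : x ∉ W₂.support := hxW u₂ hu₂ y₂ W₂ hlW₂ ha2
    have harcsup : ∀ z ∈ ((c.dropUntil u₂ hu₂).append (c.takeUntil u₁ hu₁)).support,
        z ∈ c.support := by
      intro z hz
      rw [SimpleGraph.Walk.mem_support_append_iff] at hz
      rcases hz with hz | hz
      · exact SimpleGraph.Walk.support_dropUntil_subset c hu₂ hz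
      · exact SimpleGraph.Walk.support_takeUntil_subset c hu₁ hz
    set BIG := SimpleGraph.Walk.cons ha2
      (W₂.reverse.append (((c.dropUntil u₂ hu₂).append (c.takeUntil u₁ hu₁)).append W₁))
      with hBIGdef
    have hBe : s(x, y₁) ∉ BIG.edges := by
      intro hmem
      rw [hBIGdef, SimpleGraph.Walk.edges_cons] at hmem
      rcases List.mem_cons.1 hmem with h1 | h2
      · rw [Sym2.eq_iff] at h1
        rcases h1 with ⟨-, h⟩ | ⟨-, h⟩
        · exact hne h
        · exact ha1.ne h.symm
      · rw [SimpleGraph.Walk.edges_append, List.mem_append] at h2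
        rcases h2 with h2 | h2
        · have hx2 : x ∈ W₂.reverse.support :=
            SimpleGraph.Walk.fst_mem_support_of_mem_edges _ h2
          rw [SimpleGraph.Walk.support_reverse, List.mem_reverse] at hx2
          exact hxW₂ hx2
        · rw [SimpleGraph.Walk.edges_append, List.mem_append] at h2
          rcases h2 with h2 | h2
          · exact hxs (harcsup x (SimpleGraph.Walk.fst_mem_support_of_mem_edges _ h2))
          · exact hxW₁ (SimpleGraph.Walk.fst_mem_support_of_mem_edges _ h2)
    have hBs : ∀ z ∈ BIG.support, G.Reachable a z ∧ D z ≤ r := by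
      intro z hz
      rw [hBIGdef, SimpleGraph.Walk.support_cons] at hz
      rcases List.mem_cons.1 hz with rfl | hz
      · exact ⟨hRx, by omega⟩
      · rw [SimpleGraph.Walk.mem_support_append_iff] at hz
        rcases hz with hz | hz
        · rw [SimpleGraph.Walk.support_reverse, List.mem_reverse] at hz
          obtain ⟨hR, hDz⟩ := hWsup u₂ y₂ hu₂ W₂ z hz
          exact ⟨hR, le_trans hDz (le_trans hlW₂ hmr)⟩
        · rw [SimpleGraph.Walk.mem_support_append_iff] at hz
          rcases hz with hz | hz
          · have hzc : z ∈ c.support := harcsup z hz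
            exact ⟨hRu z hzc, le_of_eq_of_le (hD0 z hzc) (Nat.zero_le _)⟩
          · obtain ⟨hR, hDz⟩ := hWsup u₁ y₁ hu₁ W₁ z hz
            exact ⟨hR, le_trans hDz (le_trans hlW₁ hmr)⟩
    have hxye : s(x, y₁) ∉ c.edges := fun h =>
      hxs (SimpleGraph.Walk.fst_mem_support_of_mem_edges c h)
    exact noextra x y₁ ha1 hxye BIG hBe hBs
  -- level sets
  set L : ℕ → Finset V := fun k => Finset.univ.filter (fun x => G.Reachable a x ∧ D x = k)
    with hLdef
  have hLmem : ∀ k x, x ∈ L k ↔ G.Reachable a x ∧ D x = k := by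
    intro k x
    rw [hLdef]
    simp
  -- cardinality of S
  have hScard : 3 ≤ S.card := by
    have h1 : c.support.tail.toFinset ⊆ S := by
      intro z hz
      exact List.mem_toFinset.2 (List.tail_subset _ (List.mem_toFinset.1 hz))
    have h2 : c.support.tail.toFinset.card = c.support.tail.length :=
      List.toFinset_card_of_nodup hc.support_nodup
    have h3 : c.support.length = c.length + 1 := SimpleGraph.Walk.length_support c
    have h4 : c.support.tail.length = c.length := by
      rw [List.length_tail, h3]
      omega
    have h5 := hc.three_le_length
    have := Finset.card_le_card h1
    omega
  -- base level
  have hLa : ∀ u ∈ c.support,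
      d - 2 ≤ ((G.neighborFinset u).filter (fun y => y ∉ c.support)).card := by
    intro u hu
    have hpart := Finset.card_filter_add_card_filter_not
      (s := G.neighborFinset u) (p := fun y => y ∈ c.support)
    have hsub2 : (G.neighborFinset u).filter (fun y => y ∈ c.support) ⊆
        Finset.univ.filter (fun w => s(u, w) ∈ c.edges) := by
      intro y hy
      rw [Finset.mem_filter, SimpleGraph.mem_neighborFinset] at hy
      exact Finset.mem_filter.2 ⟨Finset.mem_univ y, chord u y hu hy.2 hy.1⟩
    have h2 := le_trans (Finset.card_le_card hsub2) (cycle_edge_card_le_two c hc u)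
    have hdeg : (G.neighborFinset u).card = d := by
      rw [SimpleGraph.card_neighborFinset_eq_degree]; exact hreg u
    omega
  have hL1 : d - 1 ≤ (L 1).card := by
    have hsub : ∀ u ∈ S, ((G.neighborFinset u).filter (fun y => y ∉ c.support)) ⊆ L 1 := by
      intro u hu y hy
      rw [Finset.mem_filter, SimpleGraph.mem_neighborFinset] at hy
      have hus : u ∈ c.support := List.mem_toFinset.1 hu
      have hRy : G.Reachable a y := (hRu u hus).trans hy.1.reachable
      have hDy1 : D y ≤ 1 := le_trans (hDle y u hus) (SimpleGraph.dist_le hy.1.toWalk)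
      have hDy0 : D y ≠ 0 := fun h0 => hy.2 (hD0' y hRy h0)
      exact (hLmem 1 y).2 ⟨hRy, by omega⟩
    have hdisj : ∀ u₁ ∈ S, ∀ u₂ ∈ S, u₁ ≠ u₂ →
        Disjoint ((G.neighborFinset u₁).filter (fun y => y ∉ c.support))
          ((G.neighborFinset u₂).filter (fun y => y ∉ c.support)) := by
      intro u₁ hu₁ u₂ hu₂ hneq
      rw [Finset.disjoint_left]
      intro y hy1 hy2
      have hyL := hsub u₁ hu₁ hy1
      obtain ⟨hRy, hDy⟩ := (hLmem 1 y).1 hyL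
      rw [Finset.mem_filter, SimpleGraph.mem_neighborFinset] at hy1 hy2
      exact hneq (uniq 1 le_rfl hr y hRy hDy u₁ u₂ hy1.1.symm hy2.1.symm
        (le_of_eq_of_le (hD0 u₁ (List.mem_toFinset.1 hu₁)) (Nat.zero_le _))
        (le_of_eq_of_le (hD0 u₂ (List.mem_toFinset.1 hu₂)) (Nat.zero_le _)))
    calc d - 1 ≤ 3 * (d - 2) := by omega
    _ ≤ S.card * (d - 2) := Nat.mul_le_mul_right _ hScard
    _ ≤ ∑ u ∈ S, ((G.neighborFinset u).filter (fun y => y ∉ c.support)).card := by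
        have := Finset.card_nsmul_le_sum S
          (fun u => ((G.neighborFinset u).filter (fun y => y ∉ c.support)).card)
          (d - 2) (fun u hu => hLa u (List.mem_toFinset.1 hu))
        simpa [smul_eq_mul] using this
    _ = (S.biUnion (fun u => (G.neighborFinset u).filter (fun y => y ∉ c.support))).card :=
        (Finset.card_biUnion hdisj).symm
    _ ≤ (L 1).card := by
        apply Finset.card_le_card
        intro y hy
        rw [Finset.mem_biUnion] at hy
        obtain ⟨u, hu, hy⟩ := hy
        exact hsub u hu hy
  have hDadj : ∀ x y, G.Reachable a x → G.Adj x y → D y ≤ D x + 1 := by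
    intro x y hRx hadj
    obtain ⟨u, hu, he⟩ := hDex x
    obtain ⟨W, hW⟩ := ((hRu u hu).symm.trans hRx).exists_walk_length_eq_dist
    calc D y ≤ G.dist u y := hDle y u hu
    _ ≤ (W.concat hadj).length := SimpleGraph.dist_le _
    _ = D x + 1 := by rw [SimpleGraph.Walk.length_concat, hW, ← he]
  have hstep : ∀ k, 1 ≤ k → k + 1 ≤ r → (d - 1) * (L k).card ≤ (L (k + 1)).card := by
    intro k hk1 hkr
    have hsub : ∀ x ∈ L k, ((G.neighborFinset x).filter (fun y => D y = k + 1)) ⊆ L (k + 1) := by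
      intro x hx y hy
      obtain ⟨hRx, hDx⟩ := (hLmem k x).1 hx
      rw [Finset.mem_filter, SimpleGraph.mem_neighborFinset] at hy
      exact (hLmem (k + 1) y).2 ⟨hRx.trans hy.1.reachable, hy.2⟩
    have hcard : ∀ x ∈ L k, d - 1 ≤ ((G.neighborFinset x).filter (fun y => D y = k + 1)).card := by
      intro x hx
      obtain ⟨hRx, hDx⟩ := (hLmem k x).1 hx
      have hone : ((G.neighborFinset x).filter (fun y => ¬ (D y = k + 1))).card ≤ 1 := by
        rw [Finset.card_le_one]
        intro y₁ hy₁ y₂ hy₂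
        rw [Finset.mem_filter, SimpleGraph.mem_neighborFinset] at hy₁ hy₂
        have hb₁ : D y₁ ≤ k := by
          have := hDadj x y₁ hRx hy₁.1
          omega
        have hb₂ : D y₂ ≤ k := by
          have := hDadj x y₂ hRx hy₂.1
          omega
        exact uniq k hk1 (by omega) x hRx hDx y₁ y₂ hy₁.1 hy₂.1 hb₁ hb₂
      have hpart := Finset.card_filter_add_card_filter_not
        (s := G.neighborFinset x) (p := fun y => D y = k + 1)
      have hdeg : (G.neighborFinset x).card = d := by
        rw [SimpleGraph.card_neighborFinset_eq_degree]; exact hreg x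
      omega
    have hdisj : ∀ x₁ ∈ L k, ∀ x₂ ∈ L k, x₁ ≠ x₂ →
        Disjoint ((G.neighborFinset x₁).filter (fun y => D y = k + 1))
          ((G.neighborFinset x₂).filter (fun y => D y = k + 1)) := by
      intro x₁ hx₁ x₂ hx₂ hneq
      rw [Finset.disjoint_left]
      intro y hy1 hy2
      obtain ⟨hRx₁, hDx₁⟩ := (hLmem k x₁).1 hx₁
      obtain ⟨hRx₂, hDx₂⟩ := (hLmem k x₂).1 hx₂
      rw [Finset.mem_filter, SimpleGraph.mem_neighborFinset] at hy1 hy2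
      exact hneq (uniq (k + 1) (by omega) hkr y (hRx₁.trans hy1.1.reachable) hy1.2
        x₁ x₂ hy1.1.symm hy2.1.symm (by omega) (by omega))
    calc (d - 1) * (L k).card = (L k).card * (d - 1) := mul_comm _ _
    _ ≤ ∑ x ∈ L k, ((G.neighborFinset x).filter (fun y => D y = k + 1)).card := by
        have := Finset.card_nsmul_le_sum (L k)
          (fun x => ((G.neighborFinset x).filter (fun y => D y = k + 1)).card)
          (d - 1) hcard
        simpa [smul_eq_mul] using this
    _ = ((L k).biUnion (fun x => (G.neighborFinset x).filter (fun y => D y = k + 1))).card :=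
        (Finset.card_biUnion hdisj).symm
    _ ≤ (L (k + 1)).card := by
        apply Finset.card_le_card
        intro y hy
        rw [Finset.mem_biUnion] at hy
        obtain ⟨x, hx, hy⟩ := hy
        exact hsub x hx hy
  have hgrow : ∀ k, 1 ≤ k → k ≤ r → (d - 1) ^ k ≤ (L k).card := by
    intro k
    induction k with
    | zero => omega
    | succ n ih =>
      intro h1 hr'
      rcases Nat.eq_zero_or_pos n with rfl | hn
      · simpa using hL1
      · calc (d - 1) ^ (n + 1) = (d - 1) * (d - 1) ^ n := by ring
        _ ≤ (d - 1) * (L n).card := Nat.mul_le_mul_left _ (ih hn (by omega))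
        _ ≤ (L (n + 1)).card := hstep n hn hr'
  have hfin : L r ⊆ Finset.univ.filter (fun x =>
      ∃ u ∈ c.support, G.Reachable u x ∧ G.dist u x ≤ r) := by
    intro x hx
    obtain ⟨hRx, hDx⟩ := (hLmem r x).1 hx
    obtain ⟨u, hu, he⟩ := hDex x
    refine Finset.mem_filter.2 ⟨Finset.mem_univ x, u, hu, (hRu u hu).symm.trans hRx, ?_⟩
    rw [← he, hDx]
  exact le_trans (hgrow r hr le_rfl) (Finset.card_le_card hfin)


end aux

/-- If `G` is a `d`-regular `n`-vertex graph that is bicycle-free at radius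
`2r`, then the number of (distinct) cycles in `G` of length at most `r` is at
most `n / (d-1)^r`.  Cycles are identified with their edge sets. -/
theorem stmt2 {V : Type*} [Fintype V] [DecidableEq V] (G : SimpleGraph V) [DecidableRel G.Adj]
    (d r : ℕ) (hd : 3 ≤ d) (hreg : G.IsRegularOfDegree d)
    (hbf : BicycleFreeAtRadius G (2 * r))
    (C : Finset (Finset (Sym2 V)))
    (hC : ∀ s ∈ C, ∃ (a : V) (c : G.Walk a a),
      c.IsCycle ∧ c.length ≤ r ∧ c.edges.toFinset = s) :
    (C.card : ℝ) ≤ (Fintype.card V : ℝ) / ((d : ℝ) - 1) ^ r := by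
  classical
  rcases Finset.eq_empty_or_nonempty C with rfl | ⟨s₀, hs₀⟩
  · simp only [Finset.card_empty, Nat.cast_zero]
    have h3 : (3:ℝ) ≤ (d:ℝ) := by exact_mod_cast hd
    apply div_nonneg (by positivity)
    have : (0:ℝ) ≤ (d:ℝ) - 1 := by linarith
    positivity
  · have hr : 1 ≤ r := by
      obtain ⟨a0, c0, hc0, hl0, -⟩ := hC s₀ hs₀
      have := hc0.three_le_length
      omega
    have hV : Nonempty V := by
      obtain ⟨a0, -⟩ := hC s₀ hs₀
      exact ⟨a0⟩
    choose! A W hcyc hlenf hedge using hC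
    set B : Finset (Sym2 V) → Finset V := fun s => Finset.univ.filter (fun x =>
      ∃ u ∈ (W s).support, G.Reachable u x ∧ G.dist u x ≤ r) with hBdef
    have hkey : ∀ s ∈ C, (d - 1) ^ r ≤ (B s).card := fun s hs =>
      key G d r hd hreg hbf hr (A s) (W s) (hcyc s hs) (hlenf s hs)
    have hdisj : ∀ s ∈ C, ∀ t ∈ C, s ≠ t → Disjoint (B s) (B t) := by
      intro s hs t ht hst
      rw [Finset.disjoint_left]
      intro x hxs hxt
      have hside : ∀ s', s' ∈ C → x ∈ B s' → ∀ z ∈ (W s').support,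
          G.Reachable x z ∧ G.dist x z ≤ 2 * r := by
        intro s' hs' hx z hz
        rw [hBdef] at hx
        obtain ⟨-, u, hu, hru, hdu⟩ := Finset.mem_filter.1 hx
        have hruz : G.Reachable u z :=
          by
          have h1 : G.Reachable (A s') u := ⟨(W s').takeUntil u hu⟩
          have h2 : G.Reachable (A s') z := ⟨(W s').takeUntil z hz⟩
          exact h1.symm.trans h2
        refine ⟨hru.symm.trans hruz, ?_⟩
        obtain ⟨W1, hW1⟩ := hru.symm.exists_walk_length_eq_dist
        obtain ⟨W2, hW2⟩ := hruz.exists_walk_length_eq_dist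
        calc G.dist x z ≤ (W1.append W2).length := SimpleGraph.dist_le _
        _ = G.dist x u + G.dist u z := by rw [SimpleGraph.Walk.length_append, hW1, hW2]
        _ ≤ r + r := add_le_add (by rw [SimpleGraph.dist_comm]; exact hdu)
              (le_trans (intra (W s') hu hz) (hlenf s' hs'))
        _ = 2 * r := by ring
      have heq := hbf x (A s) (A t) (W s) (W t) (hcyc s hs) (hcyc t ht)
        (hside s hs hxs) (hside t ht hxt)
      exact hst (by rw [← hedge s hs, ← hedge t ht, heq])
    have hnat : C.card * (d - 1) ^ r ≤ Fintype.card V := by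
      calc C.card * (d - 1) ^ r ≤ ∑ s ∈ C, (B s).card := by
            have := Finset.card_nsmul_le_sum C (fun s => (B s).card) ((d - 1) ^ r) hkey
            simpa [smul_eq_mul] using this
      _ = (C.biUnion B).card := (Finset.card_biUnion hdisj).symm
      _ ≤ Fintype.card V := by
            rw [← Finset.card_univ]
            exact Finset.card_le_card (Finset.subset_univ _)
    have hpos : (0:ℝ) < ((d:ℝ) - 1) ^ r := by
      have h3 : (3:ℝ) ≤ (d:ℝ) := by exact_mod_cast hd
      have : (0:ℝ) < (d:ℝ) - 1 := by linarith
      positivity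
    rw [le_div_iff₀ hpos]
    have hcast : ((d:ℝ) - 1) = ((d - 1 : ℕ) : ℝ) := by
      rw [Nat.cast_sub (by omega)]
      norm_num
    rw [hcast, ← Nat.cast_pow, ← Nat.cast_mul]
    exact_mod_cast hnat
end

section
/- If G is bicycle-free at radius 2r and S is a set of vertices containing one vertex from each cycle of length at most r (one per cycle), then for any two distinct u, v ∈ S the balls of radius r around u and around v are disjoint. -/
/-- If `G` is bicycle-free at radius `2r`, and `S` contains exactly one vertex
from each cycle of length at most `r` (vertex `u ∈ S` lies on the cycle with
edge set `f u`, and distinct vertices of `S` correspond to distinct cycles),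
then the balls of radius `r` around distinct vertices of `S` are disjoint. -/
theorem stmt3 {V : Type*} [Fintype V] [DecidableEq V] (G : SimpleGraph V) (r : ℕ)
    (hbf : BicycleFreeAtRadius G (2 * r))
    (S : Finset V) (f : V → Finset (Sym2 V))
    (hcyc : ∀ u ∈ S, ∃ c : G.Walk u u,
      c.IsCycle ∧ c.length ≤ r ∧ c.edges.toFinset = f u)
    (hinj : ∀ u ∈ S, ∀ v ∈ S, f u = f v → u = v) :
    ∀ u ∈ S, ∀ v ∈ S, u ≠ v → ∀ x : V,
      ¬((G.Reachable u x ∧ G.dist u x ≤ r) ∧ (G.Reachable v x ∧ G.dist v x ≤ r)) := by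
  intro u hu v hv huv x ⟨⟨hru, hdu⟩, ⟨hrv, hdv⟩⟩
  obtain ⟨cu, hcu, hlu, hfu⟩ := hcyc u hu
  obtain ⟨cv, hcv, hlv, hfv⟩ := hcyc v hv
  obtain ⟨pu, hpu⟩ := hru.symm.exists_walk_length_eq_dist
  obtain ⟨pv, hpv⟩ := hrv.symm.exists_walk_length_eq_dist
  have key : ∀ (w : V) (c : G.Walk w w) (p : G.Walk x w), c.length ≤ r →
      p.length ≤ r → ∀ y ∈ c.support, G.Reachable x y ∧ G.dist x y ≤ 2 * r := by
    intro w c p hc hp y hy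
    refine ⟨⟨p.append (c.takeUntil y hy)⟩, ?_⟩
    calc G.dist x y ≤ (p.append (c.takeUntil y hy)).length := G.dist_le _
      _ = p.length + (c.takeUntil y hy).length := SimpleGraph.Walk.length_append _ _
      _ ≤ r + r := Nat.add_le_add hp (le_trans (c.length_takeUntil_le hy) hc)
      _ = 2 * r := by omega
  have heq : cu.edges.toFinset = cv.edges.toFinset := by
    refine hbf x u v cu cv hcu hcv ?_ ?_
    · exact key u cu pu hlu (by rw [hpu]; rwa [G.dist_comm])
    · exact key v cv pv hlv (by rw [hpv]; rwa [G.dist_comm])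
  exact huv (hinj u hu v hv (by rw [← hfu, ← hfv, heq]))
end

section
/- The spectrum of the 2-lift G₂ of G given edge-signing w is the multiset union of the spectrum of the adjacency matrix of G and the spectrum of the signed adjacency matrix of G with signs w. -/
open Matrix Polynomial

/-- Conjugation invariance of the characteristic polynomial. -/
lemma charpoly_conj_aux {n R : Type*} [Fintype n] [DecidableEq n] [CommRing R]
    (P M Q : Matrix n n R) (hPQ : P * Q = 1) (hQP : Q * P = 1) :
    (P * M * Q).charpoly = M.charpoly := by
  have hmapPQ : (C : R →+* R[X]).mapMatrix P * (C : R →+* R[X]).mapMatrix Q = 1 := by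
    rw [← _root_.map_mul, hPQ, _root_.map_one]
  have key : charmatrix (P * M * Q) =
      (C : R →+* R[X]).mapMatrix P * charmatrix M * (C : R →+* R[X]).mapMatrix Q := by
    unfold charmatrix
    rw [_root_.map_mul, _root_.map_mul, mul_sub, sub_mul]
    rw [mul_assoc]
    congr 1
    have hc : (C : R →+* R[X]).mapMatrix P * Matrix.scalar n (X : R[X]) =
          Matrix.scalar n (X : R[X]) * (C : R →+* R[X]).mapMatrix P :=
        (Matrix.scalar_commute (X : R[X]) (fun r => Commute.all _ _) _).eq.symm
    rw [hc, mul_assoc, hmapPQ, mul_one]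
  rw [Matrix.charpoly, Matrix.charpoly, key, det_mul, det_mul]
  have h1 : ((C : R →+* R[X]).mapMatrix P).det * ((C : R →+* R[X]).mapMatrix Q).det = 1 := by
    rw [← det_mul, hmapPQ, det_one]
  calc ((C : R →+* R[X]).mapMatrix P).det * (charmatrix M).det *
        ((C : R →+* R[X]).mapMatrix Q).det
      = (charmatrix M).det *
        (((C : R →+* R[X]).mapMatrix P).det * ((C : R →+* R[X]).mapMatrix Q).det) := by ring
    _ = (charmatrix M).det := by rw [h1, mul_one]

/-- The spectrum of the 2-lift `H` of `G` given an edge-signing `w` is the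
multiset union of the spectrum of the adjacency matrix of `G` and the
spectrum of the signed adjacency matrix `Ã_w`; equivalently, the
characteristic polynomial of the adjacency matrix of `H` is the product of
the characteristic polynomials of `A_G` and of `Ã_w`. -/
theorem stmt8 {V : Type*} [Fintype V] [DecidableEq V] (G : SimpleGraph V)
    [DecidableRel G.Adj]
    (w : V → V → ℝ) (hw : ∀ u v, w u v = w v u)
    (hw1 : ∀ u v, G.Adj u v → w u v = 1 ∨ w u v = -1)
    (H : SimpleGraph (V × Bool)) [DecidableRel H.Adj]
    (hH : ∀ u v a b, H.Adj (u, a) (v, b) ↔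
      G.Adj u v ∧ (if w u v = 1 then b = a else b = !a)) :
    (H.adjMatrix ℝ).charpoly =
      (G.adjMatrix ℝ).charpoly *
        (Matrix.of fun u v => if G.Adj u v then w u v else 0).charpoly := by
  classical
  set A : Matrix V V ℝ := G.adjMatrix ℝ with hA
  set S : Matrix V V ℝ := Matrix.of fun u v => if G.Adj u v then w u v else 0 with hS
  set B : Matrix V V ℝ := Matrix.of fun u v => if G.Adj u v ∧ w u v = 1 then 1 else 0 with hB
  set Cm : Matrix V V ℝ := Matrix.of fun u v => if G.Adj u v ∧ w u v ≠ 1 then 1 else 0 with hC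
  -- reindex V × Bool to V ⊕ V
  let e : V × Bool ≃ V ⊕ V :=
    { toFun := fun p => cond p.2 (Sum.inr p.1) (Sum.inl p.1)
      invFun := Sum.elim (fun u => (u, false)) (fun u => (u, true))
      left_inv := by rintro ⟨u, (_|_)⟩ <;> rfl
      right_inv := by rintro (u | u) <;> rfl }
  have hre : Matrix.reindex e e (H.adjMatrix ℝ) = Matrix.fromBlocks B Cm Cm B := by
    ext i j
    rcases i with u | u <;> rcases j with v | v
    · show (H.adjMatrix ℝ) (u, false) (v, false) = B u v
      rw [SimpleGraph.adjMatrix_apply, hB]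
      simp only [Matrix.of_apply, hH]
      by_cases hadj : G.Adj u v <;> by_cases hw' : w u v = 1 <;> simp [hadj, hw']
    · show (H.adjMatrix ℝ) (u, false) (v, true) = Cm u v
      rw [SimpleGraph.adjMatrix_apply, hC]
      simp only [Matrix.of_apply, hH]
      by_cases hadj : G.Adj u v <;> by_cases hw' : w u v = 1 <;> simp [hadj, hw']
    · show (H.adjMatrix ℝ) (u, true) (v, false) = Cm u v
      rw [SimpleGraph.adjMatrix_apply, hC]
      simp only [Matrix.of_apply, hH]
      by_cases hadj : G.Adj u v <;> by_cases hw' : w u v = 1 <;> simp [hadj, hw']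
    · show (H.adjMatrix ℝ) (u, true) (v, true) = B u v
      rw [SimpleGraph.adjMatrix_apply, hB]
      simp only [Matrix.of_apply, hH]
      by_cases hadj : G.Adj u v <;> by_cases hw' : w u v = 1 <;> simp [hadj, hw']
  have hBC : B + Cm = A := by
    ext u v
    by_cases hadj : G.Adj u v <;> by_cases hw' : w u v = 1 <;>
      simp [hA, hB, hC, hadj, hw']
  have hBC' : B - Cm = S := by
    ext u v
    by_cases hadj : G.Adj u v
    · rcases hw1 u v hadj with hw' | hw' <;> simp [hS, hB, hC, hadj, hw']
      · norm_num
    · simp [hS, hB, hC, hadj]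
  -- conjugating matrices over ℝ
  set q : Matrix V V ℝ := (1/2 : ℝ) • (1 : Matrix V V ℝ) with hq
  set P : Matrix (V ⊕ V) (V ⊕ V) ℝ := Matrix.fromBlocks 1 1 1 (-1) with hP
  set Q : Matrix (V ⊕ V) (V ⊕ V) ℝ := Matrix.fromBlocks q q q (-q) with hQ
  have hblocks : ∀ (a b c d a' b' c' d' : Matrix V V ℝ), a = a' → b = b' → c = c' → d = d' →
      Matrix.fromBlocks a b c d = Matrix.fromBlocks a' b' c' d' := by
    rintro a b c d a' b' c' d' rfl rfl rfl rfl; rfl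
  have hPQ : P * Q = 1 := by
    rw [hP, hQ, Matrix.fromBlocks_multiply, ← Matrix.fromBlocks_one]
    apply hblocks <;> simp [hq, Matrix.mul_smul, smul_smul] <;> module
  have hQP : Q * P = 1 := by
    rw [hP, hQ, Matrix.fromBlocks_multiply, ← Matrix.fromBlocks_one]
    apply hblocks <;> simp [hq, Matrix.smul_mul, smul_smul] <;> module
  have hconj : P * Matrix.fromBlocks B Cm Cm B * Q = Matrix.fromBlocks A 0 0 S := by
    rw [hP, hQ, Matrix.fromBlocks_multiply, Matrix.fromBlocks_multiply, ← hBC, ← hBC']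
    apply hblocks <;> simp [hq, Matrix.mul_smul, Matrix.smul_mul] <;> module
  calc (H.adjMatrix ℝ).charpoly
      = (Matrix.reindex e e (H.adjMatrix ℝ)).charpoly := (Matrix.charpoly_reindex e _).symm
    _ = (Matrix.fromBlocks B Cm Cm B).charpoly := by rw [hre]
    _ = (P * Matrix.fromBlocks B Cm Cm B * Q).charpoly := (charpoly_conj_aux P _ Q hPQ hQP).symm
    _ = (Matrix.fromBlocks A 0 0 S).charpoly := by rw [hconj]
    _ = A.charpoly * S.charpoly := Matrix.charpoly_fromBlocks_zero₂₁ _ _ _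
end

section
/- Let A be the adjacency matrix of a d-regular tree T of height h embedded as a subgraph of a larger vertex set, W the set of non-leaf vertices of T, and L the set of leaves. Then for any real vector f, |fᵀ A f| ≤ 2√(d-1)·Σ_{w∈W} f_w² + √(d-1)·Σ_{v∈L} f_v². -/
/-!
Orient every edge of the tree away from the root and split each product `f u f v` of
adjacent values by weighted AM-GM, `2 |f u f v| ≤ s f_child² + s⁻¹ f_parent²` with
`s = √(d-1)`. A vertex then collects `s` from its edge to its parent (a tree has at most
one) and `s⁻¹` from each child, i.e. at most `s + (d-1)/s = 2√(d-1)` at an inner vertex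
and `s` at a leaf.
-/

open Finset Matrix

namespace SimpleGraph

variable {V : Type*} {G : SimpleGraph V}

lemma sum_neighborFinset_comm [Fintype V] [DecidableRel G.Adj] (F : V → V → ℝ) :
    ∑ v, ∑ u ∈ G.neighborFinset v, F v u = ∑ v, ∑ u ∈ G.neighborFinset v, F u v := by
  simp_rw [neighborFinset_eq_filter, sum_filter]
  rw [sum_comm]
  exact sum_congr rfl fun u _ => sum_congr rfl fun v _ => if_congr (G.adj_comm v u) rfl rfl

theorem abs_dotProduct_adjMatrix_mulVec_le [Fintype V] [DecidableRel G.Adj]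
    (c : V → V → ℝ) (hc_pos : ∀ u v, G.Adj u v → 0 < c u v)
    (hc : ∀ u v, G.Adj u v → c u v * c v u = 1) (f : V → ℝ) :
    |f ⬝ᵥ G.adjMatrix ℝ *ᵥ f| ≤
      ∑ v, (∑ u ∈ G.neighborFinset v, c v u) * f v ^ 2 := by
  have hamgm : ∀ v, ∀ u ∈ G.neighborFinset v,
      2 * |f v * f u| ≤ c v u * f v ^ 2 + c u v * f u ^ 2 := by
    intro v u hu
    have hadj := (G.mem_neighborFinset v u).1 hu
    have hinv : c u v = (c v u)⁻¹ := eq_inv_of_mul_eq_one_right (hc v u hadj)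
    rw [abs_mul, ← sq_abs (f v), ← sq_abs (f u), hinv, ← mul_assoc]
    exact two_mul_le_add_mul_sq (hc_pos v u hadj)
  calc |f ⬝ᵥ G.adjMatrix ℝ *ᵥ f|
      = |∑ v, ∑ u ∈ G.neighborFinset v, f v * f u| := by
        simp only [dotProduct, adjMatrix_mulVec_apply, mul_sum]
    _ ≤ ∑ v, ∑ u ∈ G.neighborFinset v, |f v * f u| :=
        (abs_sum_le_sum_abs _ _).trans (sum_le_sum fun v _ => abs_sum_le_sum_abs _ _)
    _ ≤ ∑ v, ∑ u ∈ G.neighborFinset v, (c v u * f v ^ 2 + c u v * f u ^ 2) / 2 :=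
        sum_le_sum fun v _ => sum_le_sum fun u hu => by linarith [hamgm v u hu]
    _ = ∑ v, (∑ u ∈ G.neighborFinset v, c v u) * f v ^ 2 := by
        simp only [add_div, sum_add_distrib]
        rw [sum_neighborFinset_comm (fun v u => c u v * f u ^ 2 / 2), ← sum_add_distrib]
        refine sum_congr rfl fun v _ => ?_
        rw [← sum_add_distrib, sum_mul]
        exact sum_congr rfl fun u _ => by ring

lemma IsAcyclic.eq_penultimate_of_adj_of_dist_lt (hG : G.IsAcyclic) {r v u : V}
    {p : G.Walk r v} (hp : p.IsPath) (hadj : G.Adj v u) (hu : G.Reachable r u)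
    (hd : G.dist r u < G.dist r v) : u = p.penultimate := by
  classical
  obtain ⟨q, hq, hqlen⟩ := hu.exists_path_of_dist
  refine hG.eq_penultimate_of_adj_end hp hadj
    (hG.mem_support_of_ne_mem_support_of_adj_of_isPath hp hq hadj fun hv => ?_)
  have := (dist_le (q.takeUntil v hv)).trans (q.length_takeUntil_le_length hv)
  omega

lemma IsTree.card_filter_dist_lt_le_one [Fintype V] [DecidableRel G.Adj] (hG : G.IsTree)
    (r v : V) : #{u ∈ G.neighborFinset v | G.dist r u < G.dist r v} ≤ 1 := by
  obtain ⟨p, hp, -⟩ := (hG.connected r v).exists_path_of_dist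
  refine card_le_one.2 fun u₁ hu₁ u₂ hu₂ => ?_
  simp only [mem_filter, mem_neighborFinset] at hu₁ hu₂
  rw [hG.isAcyclic.eq_penultimate_of_adj_of_dist_lt hp hu₁.1 (hG.connected r u₁) hu₁.2,
    hG.isAcyclic.eq_penultimate_of_adj_of_dist_lt hp hu₂.1 (hG.connected r u₂) hu₂.2]

noncomputable def depthWeight (G : SimpleGraph V) (r : V) (s : ℝ) (v u : V) : ℝ :=
  if G.dist r u < G.dist r v then s else s⁻¹

lemma depthWeight_pos (r : V) {s : ℝ} (hs : 0 < s) (v u : V) : 0 < G.depthWeight r s v u := by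
  unfold depthWeight
  split_ifs <;> positivity

lemma IsTree.depthWeight_mul_depthWeight (hG : G.IsTree) (r : V) {s : ℝ} (hs : s ≠ 0)
    {u v : V} (hadj : G.Adj u v) : G.depthWeight r s u v * G.depthWeight r s v u = 1 := by
  have := hG.dist_ne_of_adj r hadj
  unfold depthWeight
  rcases lt_or_gt_of_ne this with h | h
  · rw [if_neg h.not_gt, if_pos h, inv_mul_cancel₀ hs]
  · rw [if_pos h, if_neg h.not_gt, mul_inv_cancel₀ hs]

lemma IsTree.sum_depthWeight_le [Fintype V] [DecidableRel G.Adj] (hG : G.IsTree) (r : V)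
    {s : ℝ} (hs : 1 ≤ s) (v : V) :
    ∑ u ∈ G.neighborFinset v, G.depthWeight r s v u ≤ s + s⁻¹ * (G.degree v - 1) := by
  set p := #{u ∈ G.neighborFinset v | G.dist r u < G.dist r v}
  have hp : (p : ℝ) ≤ 1 := by exact_mod_cast hG.card_filter_dist_lt_le_one r v
  have hdeg : (p : ℝ) + #{u ∈ G.neighborFinset v | ¬G.dist r u < G.dist r v} = G.degree v := by
    exact_mod_cast (card_filter_add_card_filter_not _).trans (card_neighborFinset_eq_degree G v)
  have hinv : s⁻¹ ≤ s := (inv_le_one_of_one_le₀ hs).trans hs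
  simp only [depthWeight]
  rw [sum_ite, sum_const, sum_const, nsmul_eq_mul, nsmul_eq_mul]
  -- the gap to the bound is `(1 - p) (s - s⁻¹) ≥ 0`
  nlinarith

end SimpleGraph

open SimpleGraph in
theorem stmt9_general {V : Type*} [Fintype V] (T : SimpleGraph V)
    [DecidableRel T.Adj] (d h : ℕ) (hd : 3 ≤ d) (root : V)
    (htree : T.IsTree)
    (hdepth : ∀ v, T.dist root v ≤ h)
    (hroot : T.degree root = d)
    (hinternal : ∀ v, 0 < T.dist root v → T.dist root v < h → T.degree v = d)
    (hleaf : ∀ v, T.dist root v = h → T.degree v = 1)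
    (f : V → ℝ) :
    |dotProduct f ((T.adjMatrix ℝ).mulVec f)| ≤
      2 * Real.sqrt ((d : ℝ) - 1) *
          ∑ v ∈ Finset.univ.filter (fun v => T.dist root v < h), (f v) ^ 2 +
        Real.sqrt ((d : ℝ) - 1) *
          ∑ v ∈ Finset.univ.filter (fun v => T.dist root v = h), (f v) ^ 2 := by
  set s := Real.sqrt ((d : ℝ) - 1)
  have hd' : (3 : ℝ) ≤ d := by exact_mod_cast hd
  have hs : 1 ≤ s := Real.one_le_sqrt.2 (by linarith)
  have hs_pos : 0 < s := one_pos.trans_le hs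
  have hs_inv : s⁻¹ * ((d : ℝ) - 1) = s := by
    rw [← Real.mul_self_sqrt (by linarith : (0 : ℝ) ≤ d - 1), ← mul_assoc,
      inv_mul_cancel₀ hs_pos.ne', one_mul]
  have hinner : ∀ v, T.dist root v < h → T.degree v = d := fun v hv =>
    (Nat.eq_zero_or_pos _).elim
      (fun h0 => ((htree.connected root v).dist_eq_zero_iff.1 h0) ▸ hroot)
      (fun h0 => hinternal v h0 hv)
  have hleaves : univ.filter (fun v => ¬T.dist root v < h) = univ.filter (T.dist root · = h) :=
    filter_congr fun v _ => by have := hdepth v; omega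
  calc |f ⬝ᵥ T.adjMatrix ℝ *ᵥ f|
      ≤ ∑ v, (∑ u ∈ T.neighborFinset v, T.depthWeight root s v u) * f v ^ 2 :=
        abs_dotProduct_adjMatrix_mulVec_le _ (fun u v _ => depthWeight_pos root hs_pos u v)
          (fun _ _ => htree.depthWeight_mul_depthWeight root hs_pos.ne') f
    _ ≤ ∑ v, (s + s⁻¹ * (T.degree v - 1)) * f v ^ 2 :=
        sum_le_sum fun v _ =>
          mul_le_mul_of_nonneg_right (htree.sum_depthWeight_le root hs v) (sq_nonneg _)
    _ = 2 * s * ∑ v ∈ univ.filter (T.dist root · < h), f v ^ 2 +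
          s * ∑ v ∈ univ.filter (T.dist root · = h), f v ^ 2 := by
        rw [← sum_filter_add_sum_filter_not _ (T.dist root · < h), hleaves, mul_sum, mul_sum]
        congr 1 <;> refine sum_congr rfl fun v hv => ?_ <;> rw [mem_filter] at hv
        · rw [hinner v hv.2, hs_inv]; ring
        · rw [hleaf v hv.2]; ring

/-- Quadratic form bound for a `d`-regular tree `T` of height `h` (root of
degree `d`, other internal vertices with `d-1` children, all leaves at depth
`h`): for any real vector `f` indexed by the vertices of `T`, with `W` the
non-leaf vertices and `L` the leaves,
`|fᵀ A f| ≤ 2√(d-1) Σ_{w ∈ W} f_w² + √(d-1) Σ_{v ∈ L} f_v²`. -/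
theorem stmt9 {V : Type*} [Fintype V] [DecidableEq V] (T : SimpleGraph V)
    [DecidableRel T.Adj] (d h : ℕ) (hd : 3 ≤ d) (hh : 1 ≤ h) (root : V)
    (htree : T.IsTree)
    (hdepth : ∀ v, T.dist root v ≤ h)
    (hroot : T.degree root = d)
    (hinternal : ∀ v, 0 < T.dist root v → T.dist root v < h → T.degree v = d)
    (hleaf : ∀ v, T.dist root v = h → T.degree v = 1)
    (f : V → ℝ) :
    |dotProduct f ((T.adjMatrix ℝ).mulVec f)| ≤
      2 * Real.sqrt ((d : ℝ) - 1) *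
          ∑ v ∈ Finset.univ.filter (fun v => T.dist root v < h), (f v) ^ 2 +
        Real.sqrt ((d : ℝ) - 1) *
          ∑ v ∈ Finset.univ.filter (fun v => T.dist root v = h), (f v) ^ 2 :=
  stmt9_general T d h hd root htree hdepth hroot hinternal hleaf f
end

section
/- Let A_G be the adjacency matrix of a d-regular graph G on vertex set V_G with λ(G) ≤ Λ, extended by zeros to a larger vertex set V. Let g be a unit vector on V with Σ_{v∈V} g_v = 0 and |Σ_{v∈V_G} g_v| ≤ s. Then |gᵀ A_G g| ≤ Λ·Σ_{v∈V_G} g_v² + d·s²/n, where n = |V_G|. -/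
/-!
On `V_G` write `g = a • 𝟙 + g_⊥` with `a = (∑_{V_G} g) / n` and `g_⊥ ⟂ 𝟙`. Since `𝟙_{V_G}` is a
`d`-eigenvector of the symmetric matrix `A`, the cross terms vanish and
`gᵀ A g = g_⊥ᵀ A g_⊥ + a² d n`. The spectral bound gives `|g_⊥ᵀ A g_⊥| ≤ Λ ‖g_⊥‖² ≤ Λ ∑_{V_G} g²`
(here `Λ ≥ 0`, because `V_G` has at least `d ≥ 3` vertices), and `a² d n ≤ d s² / n`.
-/

open Matrix Finset

section Eigen

variable {V R : Type*} [Fintype V] [CommRing R]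

theorem Matrix.IsSymm.dotProduct_mulVec_add_smul_of_mulVec_eq {A : Matrix V V R} (hA : A.IsSymm)
    {x f : V → R} {μ : R} (hx : A *ᵥ x = μ • x) (hf : f ⬝ᵥ x = 0) (a : R) :
    (f + a • x) ⬝ᵥ A *ᵥ (f + a • x) = f ⬝ᵥ A *ᵥ f + a ^ 2 * μ * (x ⬝ᵥ x) := by
  have hfx : f ⬝ᵥ A *ᵥ x = 0 := by rw [hx, dotProduct_smul, hf, smul_zero]
  have hxf : x ⬝ᵥ A *ᵥ f = 0 := by
    rw [dotProduct_mulVec, ← mulVec_transpose, hA.eq, hx, smul_dotProduct, dotProduct_comm, hf,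
      smul_zero]
  have hxx : x ⬝ᵥ A *ᵥ x = μ * (x ⬝ᵥ x) := by rw [hx, dotProduct_smul, smul_eq_mul]
  simp only [mulVec_add, mulVec_smul, add_dotProduct, dotProduct_add, smul_dotProduct,
    dotProduct_smul, hfx, hxf, hxx, smul_eq_mul]
  ring

end Eigen

section SupportedOn

variable {V R : Type*} [Fintype V] [CommRing R] {A : Matrix V V R} {s : Finset V}

theorem dotProduct_indicator (f g : V → R) :
    f ⬝ᵥ (s : Set V).indicator g = ∑ v ∈ s, f v * g v := by
  classical
  simp only [dotProduct, Set.indicator_apply, Finset.mem_coe, mul_ite, mul_zero,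
    Finset.sum_ite_mem, Finset.univ_inter]

theorem mulVec_indicator_of_supportedOn (hA : ∀ u v, (u ∉ s ∨ v ∉ s) → A u v = 0)
    (g : V → R) : A *ᵥ (s : Set V).indicator g = A *ᵥ g := by
  ext u
  refine Finset.sum_congr rfl fun v _ => show A u v * _ = A u v * _ from ?_
  by_cases hv : v ∈ s
  · rw [Set.indicator_of_mem (Finset.mem_coe.2 hv)]
  · rw [hA u v (Or.inr hv), zero_mul, zero_mul]

theorem dotProduct_mulVec_indicator_of_supportedOn
    (hA : ∀ u v, (u ∉ s ∨ v ∉ s) → A u v = 0) (g : V → R) :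
    (s : Set V).indicator g ⬝ᵥ A *ᵥ (s : Set V).indicator g = g ⬝ᵥ A *ᵥ g := by
  rw [mulVec_indicator_of_supportedOn hA, dotProduct_comm, dotProduct_indicator,
    dotProduct_comm, dotProduct]
  apply Finset.sum_subset (Finset.subset_univ s)
  intro u _ hu
  have hAg : (A *ᵥ g) u = 0 := Finset.sum_eq_zero fun v _ =>
    show A u v * g v = 0 by rw [hA u v (Or.inl hu), zero_mul]
  rw [hAg, zero_mul]

theorem mulVec_indicator_one_of_rowSum (hA : ∀ u v, (u ∉ s ∨ v ∉ s) → A u v = 0) {r : R}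
    (hrow : ∀ u ∈ s, ∑ v, A u v = r) :
    A *ᵥ (s : Set V).indicator 1 = r • (s : Set V).indicator 1 := by
  rw [mulVec_indicator_of_supportedOn hA]
  ext u
  by_cases hu : u ∈ s
  · simp [mulVec, dotProduct, hrow u hu, hu]
  · simp [mulVec, dotProduct, hu, hA u _ (Or.inl hu)]

end SupportedOn

theorem rowSum_le_card_of_le_one {V R : Type*} [Fintype V] [Field R] [LinearOrder R]
    [IsStrictOrderedRing R] {A : Matrix V V R} {s : Finset V}
    (hA : ∀ u v, (u ∉ s ∨ v ∉ s) → A u v = 0) (hle : ∀ u v, A u v ≤ 1) (u : V) :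
    ∑ v, A u v ≤ #s := by
  rw [← Finset.sum_subset (Finset.subset_univ s) fun v _ hv => hA u v (Or.inr hv)]
  simpa using Finset.sum_le_sum fun v (_ : v ∈ s) => hle u v

theorem nonneg_of_forall_abs_dotProduct_mulVec_le {V : Type*} [Fintype V] {A : Matrix V V ℝ}
    {s : Finset V} {Λ : ℝ}
    (hΛ : ∀ f : V → ℝ, (∑ v ∈ s, f v) = 0 → (∀ v, v ∉ s → f v = 0) →
      |f ⬝ᵥ A *ᵥ f| ≤ Λ * ∑ v ∈ s, (f v) ^ 2)
    (hs : 1 < #s) : 0 ≤ Λ := by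
  classical
  obtain ⟨v, hv, w, hw, hvw⟩ := Finset.one_lt_card.1 hs
  set f : V → ℝ := Pi.single v 1 - Pi.single w 1
  have hsum : ∑ x ∈ s, f x = 0 := by
    simp [f, Finset.sum_sub_distrib, hv, hw]
  have hout : ∀ x, x ∉ s → f x = 0 := fun x hx => by
    simp [f, ne_of_mem_of_not_mem hv hx |>.symm,
      ne_of_mem_of_not_mem hw hx |>.symm]
  have hpos : 0 < ∑ x ∈ s, f x ^ 2 :=
    Finset.sum_pos' (fun x _ => sq_nonneg _) ⟨v, hv, by simp [f, hvw]⟩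
  exact nonneg_of_mul_nonneg_left ((abs_nonneg _).trans (hΛ f hsum hout)) hpos

section Mean

variable {ι F : Type*} [Field F] (s : Finset ι) (g : ι → F)

theorem Finset.card_mul_sum_div_card [CharZero F] :
    #s * ((∑ i ∈ s, g i) / #s) = ∑ i ∈ s, g i := by
  rcases s.eq_empty_or_nonempty with rfl | hs
  · simp
  · exact mul_div_cancel₀ _ (Nat.cast_ne_zero.2 hs.card_pos.ne')

variable {s g} {a : F} (ha : #s * a = ∑ i ∈ s, g i)
include ha

theorem Finset.sum_sub_eq_zero_of_card_mul_eq : ∑ i ∈ s, (g i - a) = 0 := by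
  rw [Finset.sum_sub_distrib, Finset.sum_const, nsmul_eq_mul, ha, sub_self]

theorem Finset.sum_sub_sq_of_card_mul_eq :
    ∑ i ∈ s, (g i - a) ^ 2 = ∑ i ∈ s, g i ^ 2 - #s * a ^ 2 := by
  simp only [sub_sq, Finset.sum_add_distrib, Finset.sum_sub_distrib, ← Finset.sum_mul,
    ← Finset.mul_sum, Finset.sum_const, nsmul_eq_mul, ← ha]
  ring

end Mean

theorem abs_dotProduct_mulVec_le_of_rowSum {V : Type*} [Fintype V] {A : Matrix V V ℝ}
    {s : Finset V} {r Λ : ℝ} (hsymm : A.IsSymm) (hA : ∀ u v, (u ∉ s ∨ v ∉ s) → A u v = 0)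
    (hrow : ∀ u ∈ s, ∑ v, A u v = r)
    (hΛ : ∀ f : V → ℝ, (∑ v ∈ s, f v) = 0 → (∀ v, v ∉ s → f v = 0) →
      |f ⬝ᵥ A *ᵥ f| ≤ Λ * ∑ v ∈ s, (f v) ^ 2)
    (hr : 0 ≤ r) (g : V → ℝ) :
    |g ⬝ᵥ A *ᵥ g| ≤ Λ * (∑ v ∈ s, g v ^ 2 - #s * ((∑ v ∈ s, g v) / #s) ^ 2)
      + ((∑ v ∈ s, g v) / #s) ^ 2 * r * #s := by
  set a := (∑ v ∈ s, g v) / #s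
  set χ := (s : Set V).indicator (1 : V → ℝ)
  set f := (s : Set V).indicator fun v => g v - a
  have ha : #s * a = ∑ v ∈ s, g v := Finset.card_mul_sum_div_card s g
  have hf_mem : ∀ v ∈ s, f v = g v - a := fun v hv => Set.indicator_of_mem (mem_coe.2 hv) _
  have hf_sum : ∑ v ∈ s, f v = 0 := by
    rw [Finset.sum_congr rfl hf_mem, Finset.sum_sub_eq_zero_of_card_mul_eq ha]
  have hf_out : ∀ v, v ∉ s → f v = 0 := fun v hv => Set.indicator_of_notMem (mem_coe.not.2 hv) _
  have hfχ : f ⬝ᵥ χ = 0 := by simpa [χ, dotProduct_indicator] using hf_sum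
  have hχχ : χ ⬝ᵥ χ = #s := by simp [χ, dotProduct_indicator, Finset.sum_indicator_subset]
  have hsplit : (s : Set V).indicator g = f + a • χ := by
    ext v
    by_cases hv : v ∈ s <;> simp [f, χ, hv]
  have hquad : g ⬝ᵥ A *ᵥ g = f ⬝ᵥ A *ᵥ f + a ^ 2 * r * #s := by
    rw [← dotProduct_mulVec_indicator_of_supportedOn hA, hsplit,
      hsymm.dotProduct_mulVec_add_smul_of_mulVec_eq (mulVec_indicator_one_of_rowSum hA hrow) hfχ,
      hχχ]
  have hperp : |f ⬝ᵥ A *ᵥ f| ≤ Λ * (∑ v ∈ s, g v ^ 2 - #s * a ^ 2) := by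
    simpa only [Finset.sum_congr rfl fun v hv => congrArg (· ^ 2) (hf_mem v hv),
      Finset.sum_sub_sq_of_card_mul_eq ha] using hΛ f hf_sum hf_out
  rw [hquad]
  refine (abs_add_le _ _).trans (add_le_add hperp (abs_of_nonneg ?_).le)
  positivity

theorem stmt12_general {V : Type*} [Fintype V]
    (VG : Finset V) (A : Matrix V V ℝ) (d : ℕ) (Λ s : ℝ) (hd : 3 ≤ d)
    (hsymm : A.IsSymm)
    (h01 : ∀ u v, A u v = 0 ∨ A u v = 1)
    (hzero : ∀ u v, (u ∉ VG ∨ v ∉ VG) → A u v = 0)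
    (hreg : ∀ v ∈ VG, ∑ u, A v u = d)
    (hlam : ∀ f : V → ℝ, (∑ v ∈ VG, f v) = 0 → (∀ v, v ∉ VG → f v = 0) →
      |dotProduct f (A.mulVec f)| ≤ Λ * ∑ v ∈ VG, (f v) ^ 2)
    (g : V → ℝ)
    (hs : |∑ v ∈ VG, g v| ≤ s) :
    |dotProduct g (A.mulVec g)| ≤ Λ * (∑ v ∈ VG, (g v) ^ 2) + d * s ^ 2 / VG.card := by
  rcases VG.eq_empty_or_nonempty with rfl | ⟨v₀, hv₀⟩
  · have hA : A = 0 := by ext u v; exact hzero u v (Or.inl (Finset.notMem_empty u))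
    simp [hA]
  have hle : ∀ u v, A u v ≤ 1 := fun u v => by rcases h01 u v with h | h <;> simp [h]
  have hd_card : (d : ℝ) ≤ #VG := hreg v₀ hv₀ ▸ rowSum_le_card_of_le_one hzero hle v₀
  have hΛ : 0 ≤ Λ := by
    refine nonneg_of_forall_abs_dotProduct_mulVec_le hlam ?_
    exact_mod_cast (show (1 : ℝ) < #VG by linarith [(Nat.ofNat_le_cast.2 hd : (3 : ℝ) ≤ d)])
  have hn : (0 : ℝ) < #VG := by exact_mod_cast card_pos.2 ⟨v₀, hv₀⟩
  have hS : (∑ v ∈ VG, g v) ^ 2 ≤ s ^ 2 := sq_le_sq' (abs_le.1 hs).1 (abs_le.1 hs).2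
  have hmean : ((∑ v ∈ VG, g v) / #VG) ^ 2 * d * #VG ≤ d * s ^ 2 / #VG := by
    calc ((∑ v ∈ VG, g v) / #VG) ^ 2 * d * #VG = d * (∑ v ∈ VG, g v) ^ 2 / #VG := by
          field_simp
      _ ≤ d * s ^ 2 / #VG := by gcongr
  have hcorr : 0 ≤ Λ * (#VG * ((∑ v ∈ VG, g v) / #VG) ^ 2) := by positivity
  have hsplit := abs_dotProduct_mulVec_le_of_rowSum hsymm hzero hreg hlam d.cast_nonneg g
  linarith

/-- Let `A` be the adjacency matrix of a `d`-regular graph on vertex set `VG`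
with `λ(G) ≤ Λ` (expressed via the Rayleigh quotient over vectors supported
on `VG` orthogonal to the all-ones vector), extended by zeros to a larger
vertex set `V`.  If `g` is a unit vector on `V` with `Σ_v g_v = 0` and
`|Σ_{v ∈ VG} g_v| ≤ s`, then
`|gᵀ A g| ≤ Λ Σ_{v ∈ VG} g_v² + d s² / n` where `n = |VG|`. -/
theorem stmt12 {V : Type*} [Fintype V] [DecidableEq V]
    (VG : Finset V) (A : Matrix V V ℝ) (d : ℕ) (Λ s : ℝ) (hd : 3 ≤ d)
    (hsymm : A.IsSymm)
    (h01 : ∀ u v, A u v = 0 ∨ A u v = 1)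
    (hzero : ∀ u v, (u ∉ VG ∨ v ∉ VG) → A u v = 0)
    (hreg : ∀ v ∈ VG, ∑ u, A v u = d)
    (hlam : ∀ f : V → ℝ, (∑ v ∈ VG, f v) = 0 → (∀ v, v ∉ VG → f v = 0) →
      |dotProduct f (A.mulVec f)| ≤ Λ * ∑ v ∈ VG, (f v) ^ 2)
    (g : V → ℝ) (hunit : ∑ v, (g v) ^ 2 = 1) (hg0 : ∑ v, g v = 0)
    (hs : |∑ v ∈ VG, g v| ≤ s) :
    |dotProduct g (A.mulVec g)| ≤ Λ * (∑ v ∈ VG, (g v) ^ 2) + d * s ^ 2 / VG.card :=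
  stmt12_general VG A d Λ s hd hsymm h01 hzero hreg hlam g hs
end
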